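/- Let G and H be finite connected graphs and let S be a monophonic position set of the Cartesian product G □ H such that the first coordinates of the elements of S are pairwise distinct, the second coordinates of the elements of S are pairwise distinct, and neither the projection π_G(S) induces a clique in G nor the projection π_H(S) induces a clique in H. Then |S| ≤ 2. -/

import Mathlib

open SimpleGraph

/-- A walk is *monophonic* if it is an induced path: it is a path and the only
edges of the graph between vertices of the walk are the edges of the walk. -/
def SimpleGraph.Walk.IsMonophonic {V : Type*} {G : SimpleGraph V} {u v : V}
    (p : G.Walk u v) : Prop :=
  p.IsPath ∧ ∀ a b : V, a ∈ p.support → b ∈ p.support → G.Adj a b → p.toSubgraph.Adj a b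

/-- A set `S` is a *monophonic position set* if no monophonic path contains
more than two vertices of `S`. -/
def SimpleGraph.IsMPSet {V : Type*} (G : SimpleGraph V) (S : Set V) : Prop :=
  ∀ ⦃u v : V⦄ (p : G.Walk u v), p.IsMonophonic → ({x ∈ S | x ∈ p.support}).ncard ≤ 2

/-- The *monophonic position number*: the largest cardinality of a monophonic
position set. -/
noncomputable def SimpleGraph.mpNum {V : Type*} (G : SimpleGraph V) : ℕ :=
  sSup {n | ∃ S : Set V, G.IsMPSet S ∧ S.ncard = n}

/-!
Paths of `G □ H` are built as staircases: a monophonic path of `G` inside a row, then one of `H`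
inside a column, and so on. Such a staircase is monophonic as soon as its rows are distinct and
non-adjacent in `H`, its columns distinct and non-adjacent in `G`, and non-consecutive segments
neither meet nor touch. Routing the segments through three points shows that they lie on a common
monophonic path whenever one pair of them has non-adjacent first coordinates and one pair has
non-adjacent second coordinates. Hence, in `S`, if `x.1` and `y.1` are non-adjacent then `x.2` is
adjacent to every other second coordinate; a pair `u, v` with non-adjacent second coordinates then
gives the induced path `u.2 - x.2 - v.2` of `H`, and the staircase along it passes through `u`,
`x` and `v`.
-/

namespace SimpleGraph

section Monophonic

variable {V V' : Type*} {G : SimpleGraph V} {G' : SimpleGraph V'} {u v w : V}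

namespace Walk

lemma IsPath.append {p : G.Walk u v} {q : G.Walk v w} (hp : p.IsPath) (hq : q.IsPath)
    (hmem : ∀ x ∈ p.support, x ∈ q.support → x = v) : (p.append q).IsPath := by
  rw [isPath_def, support_append]
  refine hp.support_nodup.append hq.support_nodup.tail fun x hxp hxq => ?_
  obtain rfl := hmem x hxp (List.mem_of_mem_tail hxq)
  have hnodup := hq.support_nodup
  rw [← cons_tail_support] at hnodup
  exact (List.nodup_cons.mp hnodup).1 hxq

lemma IsMonophonic.append {p : G.Walk u v} {q : G.Walk v w} (hp : p.IsMonophonic)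
    (hq : q.IsMonophonic) (hmem : ∀ x ∈ p.support, x ∈ q.support → x = v)
    (hadj : ∀ x ∈ p.support, ∀ y ∈ q.support, G.Adj x y → x = v ∨ y = v) :
    (p.append q).IsMonophonic := by
  refine ⟨hp.1.append hq.1 hmem, fun a b ha hb hab => ?_⟩
  rw [toSubgraph_append, Subgraph.sup_adj]
  rw [mem_support_append_iff] at ha hb
  rcases ha with ha | ha <;> rcases hb with hb | hb
  · exact .inl (hp.2 a b ha hb hab)
  · rcases hadj a ha b hb hab with rfl | rfl
    · exact .inr (hq.2 _ _ q.start_mem_support hb hab)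
    · exact .inl (hp.2 _ _ ha p.end_mem_support hab)
  · rcases hadj b hb a ha hab.symm with rfl | rfl
    · exact .inr (hq.2 _ _ ha q.start_mem_support hab)
    · exact .inl (hp.2 _ _ p.end_mem_support hb hab)
  · exact .inr (hq.2 a b ha hb hab)

lemma isMonophonic_nil : (nil : G.Walk u u).IsMonophonic := by
  refine ⟨IsPath.nil, fun a b ha hb hab => ?_⟩
  simp only [support_nil, List.mem_singleton] at ha hb
  exact absurd (ha.trans hb.symm) hab.ne

lemma isMonophonic_cons_nil (h : G.Adj u v) : (cons h nil).IsMonophonic := by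
  refine ⟨by simp [h.ne], fun a b ha hb hab => ?_⟩
  simp only [support_cons, support_nil, List.mem_cons, List.not_mem_nil, or_false] at ha hb
  rcases ha with rfl | rfl <;> rcases hb with rfl | rfl
  all_goals first
    | exact absurd hab (G.irrefl)
    | simp [Walk.toSubgraph]

lemma isMonophonic_cons_cons_nil (huv : G.Adj u v) (hvw : G.Adj v w) (huw : Gᶜ.Adj u w) :
    (cons huv (cons hvw nil)).IsMonophonic := by
  refine (isMonophonic_cons_nil huv).append (isMonophonic_cons_nil hvw) ?_ ?_
  · simp [huv.ne, huw.ne]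
  · simp only [support_cons, support_nil, List.mem_cons, List.not_mem_nil, or_false]
    rintro x (rfl | rfl) y (rfl | rfl) hxy <;> simp_all [huw.2]

lemma IsMonophonic.map (f : G ↪g G') {p : G.Walk u v} (hp : p.IsMonophonic) :
    (p.map f.toHom).IsMonophonic := by
  refine ⟨hp.1.map f.injective, fun a b ha hb hab => ?_⟩
  rw [support_map, List.mem_map] at ha hb
  obtain ⟨a, ha, rfl⟩ := ha
  obtain ⟨b, hb, rfl⟩ := hb
  rw [toSubgraph_map]
  exact ⟨a, b, hp.2 a b ha hb (f.map_adj_iff.mp hab), rfl, rfl⟩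

/-- A chord would shorten the geodesic. -/
lemma IsMonophonic.of_length_eq_dist {p : G.Walk u v} (hp : p.length = G.dist u v) :
    p.IsMonophonic := by
  classical
  refine ⟨p.isPath_of_length_eq_dist hp, fun a b ha hb hab => ?_⟩
  have hedge : ∀ {x y : V} (q : G.Walk x y), q.IsSubwalk p → G.Adj x y → s(x, y) ∈ p.edges := by
    intro x y q hq hxy
    have hlen : q.length = 1 :=
      (length_eq_dist_of_subwalk hp hq).trans (dist_eq_one_iff_adj.mpr hxy)
    refine hq.edges_subset ?_
    cases q with
    | nil => simp at hlen
    | cons h q' => cases q' with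
      | nil => simp
      | cons _ _ => simp at hlen
  rw [← Subgraph.mem_edgeSet, mem_edges_toSubgraph]
  rw [← p.take_spec ha, mem_support_append_iff] at hb
  rcases hb with hb | hb
  · rw [Sym2.eq_swap]
    exact hedge _ (((p.takeUntil a ha).isSubwalk_dropUntil hb).trans (p.isSubwalk_takeUntil ha))
      hab.symm
  · exact hedge _ (((p.dropUntil a ha).isSubwalk_takeUntil hb).trans (p.isSubwalk_dropUntil ha))
      hab

end Walk

lemma Reachable.exists_isMonophonic (h : G.Reachable u v) : ∃ p : G.Walk u v, p.IsMonophonic :=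
  let ⟨p, hp⟩ := h.exists_walk_length_eq_dist
  ⟨p, .of_length_eq_dist hp⟩

lemma compl_adj_of_forall_isMonophonic_mem_support
    (h : ∀ p : G.Walk u v, p.IsMonophonic → w ∈ p.support) (hwu : w ≠ u) (hwv : w ≠ v) :
    Gᶜ.Adj u v := by
  refine ⟨fun huv => ?_, fun huv => ?_⟩
  · subst huv
    simpa [hwu] using h .nil Walk.isMonophonic_nil
  · simpa [hwu, hwv] using h _ (Walk.isMonophonic_cons_nil huv)

def OnMonophonicPath (G : SimpleGraph V) (T : Set V) : Prop :=
  ∃ (u v : V) (p : G.Walk u v), p.IsMonophonic ∧ ∀ x ∈ T, x ∈ p.support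

lemma OnMonophonicPath.map (f : G ↪g G') {T : Set V} (h : G.OnMonophonicPath T) :
    G'.OnMonophonicPath (f '' T) := by
  obtain ⟨u, v, p, hp, hT⟩ := h
  refine ⟨f u, f v, p.map f.toHom, hp.map f, ?_⟩
  rintro _ ⟨x, hx, rfl⟩
  exact (Walk.support_map _ _ ▸ List.mem_map_of_mem (hT x hx) :)

lemma IsMPSet.not_onMonophonicPath {S : Set V} (hS : G.IsMPSet S) {x y z : V} (hx : x ∈ S)
    (hy : y ∈ S) (hz : z ∈ S) (hxy : x ≠ y) (hxz : x ≠ z) (hyz : y ≠ z) :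
    ¬ G.OnMonophonicPath {x, y, z} := by
  rintro ⟨u, v, p, hp, hT⟩
  have hsub : ({x, y, z} : Set V) ⊆ {a ∈ S | a ∈ p.support} := fun a ha =>
    ⟨by rcases ha with rfl | rfl | rfl <;> assumption, hT a ha⟩
  have hfin : {a ∈ S | a ∈ p.support}.Finite :=
    p.support.finite_toSet.subset fun a ha => ha.2
  have := Set.ncard_le_ncard hsub hfin
  rw [Set.ncard_eq_three.mpr ⟨x, y, z, hxy, hxz, hyz, rfl⟩] at this
  have := hS p hp
  omega

lemma exists_compl_adj_of_not_isClique_image {ι : Type*} {f : ι → V} {S : Set ι}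
    (h : ¬ G.IsClique (f '' S)) : ∃ x ∈ S, ∃ y ∈ S, Gᶜ.Adj (f x) (f y) := by
  simp only [isClique_iff, Set.Pairwise, Set.forall_mem_image, not_forall] at h
  obtain ⟨x, hx, y, hy, hne, hadj⟩ := h
  exact ⟨x, hx, y, hy, hne, hadj⟩

end Monophonic

section BoxProd

variable {α β : Type*} {G : SimpleGraph α} {H : SimpleGraph β}

namespace Walk

variable {a₁ a₂ a₃ : α} {b₁ b₂ b₃ : β}

lemma mem_support_boxProdLeft (Q : G.Walk a₁ a₂) {x : α × β} :
    x ∈ (Q.boxProdLeft H b₁).support ↔ x.1 ∈ Q.support ∧ x.2 = b₁ := by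
  change x ∈ (Q.map (G.boxProdLeft H b₁).toHom).support ↔ _
  rw [support_map, List.mem_map]
  exact ⟨by rintro ⟨a, ha, rfl⟩; exact ⟨ha, rfl⟩, fun ⟨hx, h⟩ => ⟨x.1, hx, Prod.ext rfl h.symm⟩⟩

lemma mem_support_boxProdRight (R : H.Walk b₁ b₂) {x : α × β} :
    x ∈ (R.boxProdRight G a₁).support ↔ x.2 ∈ R.support ∧ x.1 = a₁ := by
  change x ∈ (R.map (G.boxProdRight H a₁).toHom).support ↔ _
  rw [support_map, List.mem_map]
  exact ⟨by rintro ⟨b, hb, rfl⟩; exact ⟨hb, rfl⟩, fun ⟨hx, h⟩ => ⟨x.2, hx, Prod.ext h.symm rfl⟩⟩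

lemma IsMonophonic.boxProdLeft {Q : G.Walk a₁ a₂} (hQ : Q.IsMonophonic) :
    (Q.boxProdLeft H b₁).IsMonophonic :=
  hQ.map _

lemma IsMonophonic.boxProdRight {R : H.Walk b₁ b₂} (hR : R.IsMonophonic) :
    (R.boxProdRight G a₁).IsMonophonic :=
  hR.map _

lemma isMonophonic_staircase₂ {Q : G.Walk a₁ a₂} {R : H.Walk b₁ b₂} (hQ : Q.IsMonophonic)
    (hR : R.IsMonophonic) : ((Q.boxProdLeft H b₁).append (R.boxProdRight G a₂)).IsMonophonic := by
  refine hQ.boxProdLeft.append hR.boxProdRight (fun x hx hx' => ?_) ?_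
  · rw [mem_support_boxProdLeft] at hx
    rw [mem_support_boxProdRight] at hx'
    exact Prod.ext hx'.2 hx.2
  · rintro ⟨x₁, x₂⟩ hx ⟨y₁, y₂⟩ hy hxy
    obtain ⟨-, rfl⟩ := (mem_support_boxProdLeft _).mp hx
    obtain ⟨-, rfl⟩ := (mem_support_boxProdRight _).mp hy
    rcases boxProd_adj.mp hxy with ⟨-, rfl⟩ | ⟨-, rfl⟩
    · exact .inr rfl
    · exact .inl rfl

lemma isMonophonic_staircase₃ {Q₁ : G.Walk a₁ a₂} {R : H.Walk b₁ b₂} {Q₂ : G.Walk a₂ a₃}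
    (hQ₁ : Q₁.IsMonophonic) (hR : R.IsMonophonic) (hQ₂ : Q₂.IsMonophonic) (hb : Hᶜ.Adj b₁ b₂) :
    (((Q₁.boxProdLeft H b₁).append (R.boxProdRight G a₂)).append
      (Q₂.boxProdLeft H b₂)).IsMonophonic := by
  refine (isMonophonic_staircase₂ hQ₁ hR).append hQ₂.boxProdLeft (fun x hx hx' => ?_) ?_
  · rw [mem_support_boxProdLeft] at hx'
    rcases (mem_support_append_iff _ _).mp hx with hx | hx
    · exact absurd (((mem_support_boxProdLeft _).mp hx).2.symm.trans hx'.2) hb.ne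
    · exact Prod.ext ((mem_support_boxProdRight _).mp hx).2 hx'.2
  · rintro ⟨x₁, x₂⟩ hx ⟨y₁, y₂⟩ hy hxy
    obtain ⟨-, rfl⟩ := (mem_support_boxProdLeft _).mp hy
    rcases (mem_support_append_iff _ _).mp hx with hx | hx
    · obtain ⟨-, rfl⟩ := (mem_support_boxProdLeft _).mp hx
      rcases boxProd_adj.mp hxy with ⟨-, h⟩ | ⟨h, -⟩
      · exact absurd h hb.ne
      · exact absurd h hb.2
    · obtain ⟨-, rfl⟩ := (mem_support_boxProdRight _).mp hx
      rcases boxProd_adj.mp hxy with ⟨-, rfl⟩ | ⟨-, rfl⟩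
      · exact .inl rfl
      · exact .inr rfl

lemma isMonophonic_staircase₄ {Q₁ : G.Walk a₁ a₂} {R₁ : H.Walk b₁ b₂} {Q₂ : G.Walk a₂ a₃}
    {R₂ : H.Walk b₂ b₃} (hQ₁ : Q₁.IsMonophonic) (hR₁ : R₁.IsMonophonic)
    (hQ₂ : Q₂.IsMonophonic) (hR₂ : R₂.IsMonophonic) (hb : Hᶜ.Adj b₁ b₂) (ha : Gᶜ.Adj a₂ a₃)
    (ha₃ : a₃ ∉ Q₁.support) (hb₁ : b₁ ∉ R₂.support) :
    ((((Q₁.boxProdLeft H b₁).append (R₁.boxProdRight G a₂)).append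
      (Q₂.boxProdLeft H b₂)).append (R₂.boxProdRight G a₃)).IsMonophonic := by
  refine (isMonophonic_staircase₃ hQ₁ hR₁ hQ₂ hb).append hR₂.boxProdRight
    (fun x hx hx' => ?_) ?_
  · rw [mem_support_boxProdRight] at hx'
    simp only [mem_support_append_iff, mem_support_boxProdLeft, mem_support_boxProdRight] at hx
    rcases hx with (⟨hx₁, -⟩ | ⟨-, hx₁⟩) | ⟨-, hx₂⟩
    · exact absurd (hx'.2 ▸ hx₁) ha₃
    · exact absurd (hx₁.symm.trans hx'.2) ha.ne
    · exact Prod.ext hx'.2 hx₂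
  · rintro ⟨x₁, x₂⟩ hx ⟨y₁, y₂⟩ hy hxy
    obtain ⟨hy₂, rfl⟩ := (mem_support_boxProdRight _).mp hy
    simp only [mem_support_append_iff, mem_support_boxProdLeft, mem_support_boxProdRight] at hx
    rcases hx with (⟨hx₁, rfl⟩ | ⟨-, rfl⟩) | ⟨-, rfl⟩
    · rcases boxProd_adj.mp hxy with ⟨-, rfl⟩ | ⟨-, rfl⟩
      · exact absurd hy₂ hb₁
      · exact absurd hx₁ ha₃
    · rcases boxProd_adj.mp hxy with ⟨h, -⟩ | ⟨-, h⟩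
      · exact absurd h ha.2
      · exact absurd h ha.ne
    · rcases boxProd_adj.mp hxy with ⟨-, rfl⟩ | ⟨-, rfl⟩
      · exact .inr rfl
      · exact .inl rfl

end Walk

variable {p q r : α × β} {S : Set (α × β)}

open Walk

lemma onMonophonicPath_of_mem_support_snd (hG : G.Connected) {R : H.Walk p.2 q.2}
    (hR : R.IsMonophonic) (hr : r.2 ∈ R.support) (hpq : Hᶜ.Adj p.2 q.2) :
    (G □ H).OnMonophonicPath {p, r, q} := by
  obtain ⟨Q₁, hQ₁⟩ := (hG p.1 r.1).exists_isMonophonic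
  obtain ⟨Q₂, hQ₂⟩ := (hG r.1 q.1).exists_isMonophonic
  refine ⟨_, _, _, isMonophonic_staircase₃ hQ₁ hR hQ₂ hpq, ?_⟩
  simp only [Set.mem_insert_iff, Set.mem_singleton_iff, forall_eq_or_imp, forall_eq]
  refine ⟨start_mem_support _, ?_, end_mem_support _⟩
  simp only [mem_support_append_iff, mem_support_boxProdRight]
  exact .inl (.inr ⟨hr, trivial⟩)

lemma onMonophonicPath_of_mem_support_fst (hH : H.Connected) {P : G.Walk p.1 q.1}
    (hP : P.IsMonophonic) (hr : r.1 ∈ P.support) (hpq : Gᶜ.Adj p.1 q.1) :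
    (G □ H).OnMonophonicPath {p, r, q} := by
  have h := (onMonophonicPath_of_mem_support_snd (G := H) (p := p.swap) (q := q.swap)
    (r := r.swap) hH hP hr hpq).map (boxProdComm H G).toEmbedding
  simpa [Set.image_insert_eq] using h

lemma onMonophonicPath_of_not_mem_support (hG : G.Connected) (hH : H.Connected)
    {Q : G.Walk p.1 q.1} (hQ : Q.IsMonophonic) (hrQ : r.1 ∉ Q.support)
    {R : H.Walk q.2 r.2} (hR : R.IsMonophonic) (hpR : p.2 ∉ R.support)
    (hpq : Hᶜ.Adj p.2 q.2) (hqr : Gᶜ.Adj q.1 r.1) :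
    (G □ H).OnMonophonicPath {p, q, r} := by
  obtain ⟨R₁, hR₁⟩ := (hH p.2 q.2).exists_isMonophonic
  obtain ⟨Q₂, hQ₂⟩ := (hG q.1 r.1).exists_isMonophonic
  refine ⟨_, _, _, isMonophonic_staircase₄ hQ hR₁ hQ₂ hR hpq hqr hrQ hpR, ?_⟩
  simp only [Set.mem_insert_iff, Set.mem_singleton_iff, forall_eq_or_imp, forall_eq]
  refine ⟨start_mem_support _, ?_, end_mem_support _⟩
  simp only [mem_support_append_iff, mem_support_boxProdRight]
  exact .inl (.inl (.inr ⟨end_mem_support _, trivial⟩))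

lemma onMonophonicPath_of_compl_adj_snd_of_compl_adj_fst (hG : G.Connected) (hH : H.Connected)
    (hpq : Hᶜ.Adj p.2 q.2) (hqr : Gᶜ.Adj q.1 r.1) (hpr₁ : p.1 ≠ r.1) (hpr₂ : p.2 ≠ r.2) :
    (G □ H).OnMonophonicPath {p, q, r} := by
  by_cases hQ : ∃ Q : G.Walk p.1 q.1, Q.IsMonophonic ∧ r.1 ∉ Q.support
  · obtain ⟨Q, hQ, hrQ⟩ := hQ
    by_cases hR : ∃ R : H.Walk q.2 r.2, R.IsMonophonic ∧ p.2 ∉ R.support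
    · obtain ⟨R, hR, hpR⟩ := hR
      exact onMonophonicPath_of_not_mem_support hG hH hQ hrQ hR hpR hpq hqr
    · push Not at hR
      obtain ⟨R, hR'⟩ := (hH q.2 r.2).exists_isMonophonic
      have hqr₂ := compl_adj_of_forall_isMonophonic_mem_support hR hpq.ne hpr₂
      rw [Set.insert_comm]
      exact onMonophonicPath_of_mem_support_snd hG hR' (hR R hR') hqr₂
  · push Not at hQ
    obtain ⟨P, hP⟩ := (hG p.1 q.1).exists_isMonophonic
    have hpq₁ := compl_adj_of_forall_isMonophonic_mem_support hQ hpr₁.symm hqr.ne.symm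
    rw [Set.pair_comm]
    exact onMonophonicPath_of_mem_support_fst hH hP (hQ P hP) hpq₁

lemma onMonophonicPath_of_compl_adj_fst_and_snd (hG : G.Connected) (hH : H.Connected)
    (hpq₂ : Hᶜ.Adj p.2 q.2) (hpq₁ : Gᶜ.Adj p.1 q.1) (hpr₁ : p.1 ≠ r.1) (hqr₁ : q.1 ≠ r.1)
    (hpr₂ : p.2 ≠ r.2) (hqr₂ : q.2 ≠ r.2) :
    (G □ H).OnMonophonicPath {p, q, r} := by
  by_cases hpr : G.Adj p.1 r.1
  · by_cases hrq : G.Adj r.1 q.1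
    · rw [Set.pair_comm]
      exact onMonophonicPath_of_mem_support_fst hH (isMonophonic_cons_cons_nil hpr hrq hpq₁)
        (by simp) hpq₁
    · exact onMonophonicPath_of_compl_adj_snd_of_compl_adj_fst hG hH hpq₂
        ⟨hqr₁, fun h => hrq h.symm⟩ hpr₁ hpr₂
  · rw [Set.insert_comm]
    exact onMonophonicPath_of_compl_adj_snd_of_compl_adj_fst hG hH hpq₂.symm
      ⟨hpr₁, hpr⟩ hqr₁ hqr₂

lemma IsMPSet.adj_snd_of_compl_adj_fst (hS : (G □ H).IsMPSet S) (hG : G.Connected)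
    (hH : H.Connected) (hfst : S.InjOn Prod.fst) (hsnd : S.InjOn Prod.snd) (hcard : 2 < S.ncard)
    {x y : α × β} (hx : x ∈ S) (hy : y ∈ S) (hxy : Gᶜ.Adj x.1 y.1) :
    ∀ z ∈ S, z ≠ x → H.Adj x.2 z.2 := by
  obtain ⟨t, ⟨ht, htx : t ≠ x⟩, hty⟩ := Set.exists_ne_of_one_lt_ncard (s := S \ {x})
    (by rw [Set.ncard_sdiff_singleton_of_mem hx]; omega) y
  have hxy' : x ≠ y := fun h => hxy.ne (h ▸ rfl)
  intro z hz hzx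
  by_contra hn
  rcases eq_or_ne z y with rfl | hzy
  · exact hS.not_onMonophonicPath hx hz ht hzx.symm (Ne.symm htx) (Ne.symm hty)
      (onMonophonicPath_of_compl_adj_fst_and_snd hG hH ⟨hsnd.ne hx hz hzx.symm, hn⟩ hxy
        (hfst.ne hx ht (Ne.symm htx)) (hfst.ne hz ht (Ne.symm hty))
        (hsnd.ne hx ht (Ne.symm htx)) (hsnd.ne hz ht (Ne.symm hty)))
  · exact hS.not_onMonophonicPath hz hx hy hzx hzy hxy'
      (onMonophonicPath_of_compl_adj_snd_of_compl_adj_fst hG hH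
        ⟨hsnd.ne hz hx hzx, fun h => hn h.symm⟩ hxy (hfst.ne hz hy hzy) (hsnd.ne hz hy hzy))

end BoxProd

end SimpleGraph

theorem varied_mpSet_card_le_two_general {α β : Type*}
    (G : SimpleGraph α) (H : SimpleGraph β) (hG : G.Connected) (hH : H.Connected)
    (S : Set (α × β)) (hS : (G □ H).IsMPSet S)
    (hfst : Set.InjOn Prod.fst S) (hsnd : Set.InjOn Prod.snd S)
    (hGclique : ¬ G.IsClique (Prod.fst '' S)) (hHclique : ¬ H.IsClique (Prod.snd '' S)) :
    S.ncard ≤ 2 := by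
  by_contra! hcard
  obtain ⟨x, hx, y, hy, hxy⟩ := exists_compl_adj_of_not_isClique_image hGclique
  obtain ⟨u, hu, v, hv, huv⟩ := exists_compl_adj_of_not_isClique_image hHclique
  have hxS := hS.adj_snd_of_compl_adj_fst hG hH hfst hsnd hcard hx hy hxy
  have huv' : u ≠ v := fun h => huv.ne (h ▸ rfl)
  have hux : u ≠ x := by
    rintro rfl
    exact huv.2 (hxS v hv (Ne.symm huv'))
  have hvx : v ≠ x := by
    rintro rfl
    exact huv.2 (hxS u hu huv').symm
  exact hS.not_onMonophonicPath hu hx hv hux huv' (Ne.symm hvx)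
    (onMonophonicPath_of_mem_support_snd hG
      (Walk.isMonophonic_cons_cons_nil (hxS u hu hux).symm (hxS v hv hvx) huv) (by simp) huv)

/-- A varied monophonic position set of `G □ H` (distinct first coordinates,
distinct second coordinates, neither projection a clique) has at most 2 vertices. -/
theorem varied_mpSet_card_le_two {α β : Type*} [Fintype α] [Fintype β]
    (G : SimpleGraph α) (H : SimpleGraph β) (hG : G.Connected) (hH : H.Connected)
    (S : Set (α × β)) (hS : (G □ H).IsMPSet S)
    (hfst : Set.InjOn Prod.fst S) (hsnd : Set.InjOn Prod.snd S)
    (hGclique : ¬ G.IsClique (Prod.fst '' S)) (hHclique : ¬ H.IsClique (Prod.snd '' S)) :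
    S.ncard ≤ 2 :=
  varied_mpSet_card_le_two_general G H hG hH S hS hfst hsnd hGclique hHclique
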